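/- arXiv:1408.2317 — 2 statements merged into one kernel-verified Lean document; each statement's English description precedes it below -/
import Mathlib

section
/- For positive integers m and n, the total chromatic number of the complete bipartite graph K_{m,n} equals max{m,n}+1 if m ≠ n, and equals n+2 if m = n. -/
/-! A vertex and its `d` incident edges need `d + 1` distinct colors, so
`χ''(K_{m,n}) ≥ max m n + 1`. For `m < n` the bound is met by coloring edge `(i, j)` with
`(i + j) mod n`, right vertex `j` with the color `(m + j) mod n` that edge `(m, j)` would get, and
all left vertices with one new color (for `m = n` the same scheme modulo `n + 1` gives `n + 2`
colors). For `m = n` with `n + 1` colors every vertex sees every color, so for a fixed left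
vertex `u` each right vertex lies on an edge of color `cv u`; these edges form a matching covering
the right side, hence also the left side, and one of them is incident to `u`, which is
impossible. -/

namespace ITC

variable {V : Type*}

/-- A total coloring: proper on vertices, edges, and incident vertex-edge pairs. -/
def IsTotalColoring (G : SimpleGraph V) (cv : V → ℕ) (ce : Sym2 V → ℕ) : Prop :=
  (∀ u v, G.Adj u v → cv u ≠ cv v) ∧
  (∀ e f, e ∈ G.edgeSet → f ∈ G.edgeSet → e ≠ f → (∃ w, w ∈ e ∧ w ∈ f) → ce e ≠ ce f) ∧
  (∀ v e, e ∈ G.edgeSet → v ∈ e → cv v ≠ ce e)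

/-- The set of colors on a vertex `v` together with its incident edges. -/
def palette (G : SimpleGraph V) (cv : V → ℕ) (ce : Sym2 V → ℕ) (v : V) : Set ℕ :=
  insert (cv v) {c | ∃ e ∈ G.edgeSet, v ∈ e ∧ ce e = c}

/-- Degree of a vertex. -/
noncomputable def deg (G : SimpleGraph V) (v : V) : ℕ := (G.neighborSet v).ncard

/-- An interval total `t`-coloring. -/
def IsIntervalTotalColoring (G : SimpleGraph V) (t : ℕ) (cv : V → ℕ)
    (ce : Sym2 V → ℕ) : Prop :=
  IsTotalColoring G cv ce ∧
  (∀ v, cv v ∈ Set.Icc 1 t) ∧ (∀ e ∈ G.edgeSet, ce e ∈ Set.Icc 1 t) ∧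
  (∀ c ∈ Set.Icc 1 t, (∃ v, cv v = c) ∨ (∃ e ∈ G.edgeSet, ce e = c)) ∧
  (∀ v, ∃ a, palette G cv ce v = Set.Icc a (a + deg G v))

def HasIntervalTotalColoring (G : SimpleGraph V) (t : ℕ) : Prop :=
  ∃ cv ce, IsIntervalTotalColoring G t cv ce

/-- Minimum span of interval total colorings. -/
noncomputable def wtau (G : SimpleGraph V) : ℕ := sInf {t | HasIntervalTotalColoring G t}

/-- Maximum span of interval total colorings. -/
noncomputable def Wtau (G : SimpleGraph V) : ℕ := sSup {t | HasIntervalTotalColoring G t}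

/-- Total chromatic number: least `k` such that there is a total coloring
with colors in `{1, …, k}`. -/
noncomputable def totalChromaticNumber (G : SimpleGraph V) : ℕ :=
  sInf {k | ∃ cv ce, IsTotalColoring G cv ce ∧ (∀ v, cv v ∈ Set.Icc 1 k) ∧
    ∀ e ∈ G.edgeSet, ce e ∈ Set.Icc 1 k}

/-- A proper edge coloring. -/
def IsProperEdgeColoring (G : SimpleGraph V) (ce : Sym2 V → ℕ) : Prop :=
  ∀ e f, e ∈ G.edgeSet → f ∈ G.edgeSet → e ≠ f → (∃ w, w ∈ e ∧ w ∈ f) → ce e ≠ ce f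

/-- Colors appearing on the edges incident to `v`. -/
def edgePalette (G : SimpleGraph V) (ce : Sym2 V → ℕ) (v : V) : Set ℕ :=
  {c | ∃ e ∈ G.edgeSet, v ∈ e ∧ ce e = c}

/-- An interval (edge) `t`-coloring. -/
def IsIntervalEdgeColoring (G : SimpleGraph V) (t : ℕ) (ce : Sym2 V → ℕ) : Prop :=
  IsProperEdgeColoring G ce ∧
  (∀ e ∈ G.edgeSet, ce e ∈ Set.Icc 1 t) ∧
  (∀ c ∈ Set.Icc 1 t, ∃ e ∈ G.edgeSet, ce e = c) ∧
  (∀ v, ∃ a, edgePalette G ce v = Set.Icc (a + 1) (a + deg G v))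

/-- The hypercube `Q_n`. -/
def hypercube (n : ℕ) : SimpleGraph (Fin n → Bool) where
  Adj u v := ∃! i, u i ≠ v i
  symm := ⟨by
    rintro u v ⟨i, hi, hu⟩
    exact ⟨i, Ne.symm hi, fun j hj => hu j (Ne.symm hj)⟩⟩
  loopless := ⟨by
    rintro u ⟨i, hi, -⟩
    exact hi rfl⟩

/-- The complete graph on `Fin (2*r)` minus the perfect matching joining `i` and `i+r`. -/
def Kminus (r : ℕ) : SimpleGraph (Fin (2 * r)) where
  Adj i j := i ≠ j ∧ ¬((i : ℕ) + r = (j : ℕ) ∨ (j : ℕ) + r = (i : ℕ))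
  symm := ⟨by
    rintro i j ⟨h1, h2⟩
    exact ⟨h1.symm, fun h => h2 h.symm⟩⟩
  loopless := ⟨by
    rintro i ⟨h1, -⟩
    exact h1 rfl⟩

/-- Blow up each vertex of `H` into a copy of `β` (no edges inside copies). -/
def blowup {α : Type*} (H : SimpleGraph α) (β : Type*) : SimpleGraph (α × β) where
  Adj u v := H.Adj u.1 v.1
  symm := ⟨fun _ _ h => H.adj_symm h⟩
  loopless := ⟨fun u h => H.irrefl h⟩

open Finset Sum

def IsTotalColoringWith (G : SimpleGraph V) (k : ℕ) (cv : V → ℕ) (ce : Sym2 V → ℕ) : Prop :=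
  IsTotalColoring G cv ce ∧ (∀ v, cv v ∈ Set.Icc 1 k) ∧ ∀ e ∈ G.edgeSet, ce e ∈ Set.Icc 1 k

def TotalColorable (G : SimpleGraph V) (k : ℕ) : Prop :=
  ∃ cv ce, IsTotalColoringWith G k cv ce

lemma totalChromaticNumber_eq_sInf (G : SimpleGraph V) :
    totalChromaticNumber G = sInf {k | TotalColorable G k} := rfl

section Embedding

variable {W : Type*} {G : SimpleGraph V} {G' : SimpleGraph W} {k : ℕ}

lemma IsTotalColoringWith.comap {cv : W → ℕ} {ce : Sym2 W → ℕ}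
    (h : IsTotalColoringWith G' k cv ce) (f : G ↪g G') :
    IsTotalColoringWith G k (cv ∘ f) (ce ∘ Sym2.map f) := by
  obtain ⟨⟨hV, hE, hI⟩, hv, he⟩ := h
  refine ⟨⟨fun u v huv => hV _ _ (f.map_adj_iff.2 huv), ?_, ?_⟩, fun v => hv (f v),
    fun e he' => he _ (f.map_mem_edgeSet_iff.2 he')⟩
  · rintro e e' he he' hne ⟨w, hw, hw'⟩
    exact hE _ _ (f.map_mem_edgeSet_iff.2 he) (f.map_mem_edgeSet_iff.2 he')
      ((Sym2.map.injective f.injective).ne hne)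
      ⟨f w, Sym2.mem_map.2 ⟨w, hw, rfl⟩, Sym2.mem_map.2 ⟨w, hw', rfl⟩⟩
  · exact fun v e he hv => hI _ _ (f.map_mem_edgeSet_iff.2 he) (Sym2.mem_map.2 ⟨v, hv, rfl⟩)

lemma TotalColorable.comap (f : G ↪g G') : TotalColorable G' k → TotalColorable G k :=
  fun ⟨_, _, h⟩ => ⟨_, _, h.comap f⟩

lemma totalChromaticNumber_congr (e : G ≃g G') :
    totalChromaticNumber G = totalChromaticNumber G' := by
  simp only [totalChromaticNumber_eq_sInf]
  congr 1
  ext k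
  exact ⟨TotalColorable.comap e.symm.toEmbedding, TotalColorable.comap e.toEmbedding⟩

end Embedding

section Palette

variable {G : SimpleGraph V} {k : ℕ} {cv : V → ℕ} {ce : Sym2 V → ℕ} {v : V} {s : Finset V}

lemma IsTotalColoring.card_insert_image (h : IsTotalColoring G cv ce)
    (hs : ∀ w ∈ s, G.Adj v w) :
    #(insert (cv v) (s.image fun w => ce s(v, w))) = #s + 1 := by
  obtain ⟨-, hE, hI⟩ := h
  rw [card_insert_of_notMem, card_image_of_injOn]
  · intro w hw w' hw' hc
    by_contra hne
    exact hE _ _ (hs w hw) (hs w' hw') (fun heq => hne (Sym2.congr_right.1 heq))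
      ⟨v, by simp, by simp⟩ hc
  · simp only [mem_image, not_exists, not_and]
    exact fun w hw hc => hI v _ (hs w hw) (Sym2.mem_mk_left v w) hc.symm

lemma IsTotalColoringWith.insert_image_subset (h : IsTotalColoringWith G k cv ce)
    (hs : ∀ w ∈ s, G.Adj v w) :
    insert (cv v) (s.image fun w => ce s(v, w)) ⊆ Icc 1 k := by
  simp only [insert_subset_iff, image_subset_iff, mem_Icc, ← Set.mem_Icc]
  exact ⟨h.2.1 v, fun w hw => h.2.2 _ (hs w hw)⟩

lemma IsTotalColoringWith.card_add_one_le (h : IsTotalColoringWith G k cv ce)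
    (hs : ∀ w ∈ s, G.Adj v w) : #s + 1 ≤ k := by
  simpa [h.1.card_insert_image hs] using card_le_card (h.insert_image_subset hs)

lemma IsTotalColoringWith.exists_color_eq_of_card_add_one_eq (h : IsTotalColoringWith G k cv ce)
    (hs : ∀ w ∈ s, G.Adj v w) (hk : #s + 1 = k) {c : ℕ} (hc : c ∈ Set.Icc 1 k)
    (hcv : c ≠ cv v) : ∃ w ∈ s, ce s(v, w) = c := by
  have hfull : insert (cv v) (s.image fun w => ce s(v, w)) = Icc 1 k :=
    eq_of_subset_of_card_le (h.insert_image_subset hs) (by simp [h.1.card_insert_image hs, hk])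
  have hmem : c ∈ insert (cv v) (s.image fun w => ce s(v, w)) := by
    rw [hfull]
    simpa using hc
  simpa [hcv] using hmem

end Palette

section CompleteBipartite

variable {α β : Type*}

lemma mem_edgeSet_completeBipartiteGraph {e : Sym2 (α ⊕ β)} :
    e ∈ (completeBipartiteGraph α β).edgeSet ↔ ∃ a b, s(inl a, inr b) = e := by
  simp [SimpleGraph.edgeSet_completeBipartiteGraph]

def completeBipartiteGraphSwap (α β : Type*) :
    completeBipartiteGraph α β ≃g completeBipartiteGraph β α where
  toEquiv := Equiv.sumComm α β
  map_rel_iff' := by rintro (a | a) (b | b) <;> simp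

lemma isProperEdgeColoring_completeBipartiteGraph {ce : Sym2 (α ⊕ β) → ℕ}
    (hl : ∀ a, Function.Injective fun b => ce s(inl a, inr b))
    (hr : ∀ b, Function.Injective fun a => ce s(inl a, inr b)) :
    IsProperEdgeColoring (completeBipartiteGraph α β) ce := by
  simp only [IsProperEdgeColoring, mem_edgeSet_completeBipartiteGraph]
  rintro _ _ ⟨a, b, rfl⟩ ⟨a', b', rfl⟩ hne ⟨w, hw, hw'⟩ hc
  rw [Sym2.mem_iff] at hw hw'
  rcases hw with rfl | rfl <;> rcases hw' with h | h <;>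
    simp only [reduceCtorEq, inl.injEq, inr.injEq] at h
  · subst h
    exact hne (by rw [hl _ hc])
  · subst h
    exact hne (by rw [hr _ hc])

lemma IsTotalColoringWith.card_add_one_le_of_completeBipartiteGraph [Fintype β] {k : ℕ}
    {cv : α ⊕ β → ℕ} {ce : Sym2 (α ⊕ β) → ℕ}
    (h : IsTotalColoringWith (completeBipartiteGraph α β) k cv ce) (a : α) :
    Fintype.card β + 1 ≤ k := by
  simpa using h.card_add_one_le (v := inl a) (s := univ.map .inr) (by simp)

lemma not_totalColorable_completeBipartiteGraph_self [Fintype α] [Nonempty α] :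
    ¬ TotalColorable (completeBipartiteGraph α α) (Fintype.card α + 1) := by
  rintro ⟨cv, ce, h⟩
  obtain ⟨⟨hV, hE, hI⟩, hv, -⟩ := id h
  obtain ⟨a₀⟩ := ‹Nonempty α›
  have hmatch : ∀ b, ∃ a, ce s(inr b, inl a) = cv (inl a₀) := fun b => by
    simpa using h.exists_color_eq_of_card_add_one_eq (v := inr b) (s := univ.map .inl)
      (by simp) (by simp) (hv _) (hV _ _ (by simp))
  choose f hf using hmatch
  have hf_inj : Function.Injective f := fun b b' hbb' => by
    by_contra hne
    refine hE s(inr b, inl (f b)) s(inr b', inl (f b')) (by simp) (by simp) (by simp [hne])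
      ⟨inl (f b), by simp, by simp [hbb']⟩ ?_
    rw [hf, hf]
  obtain ⟨b, hb⟩ := (Finite.injective_iff_surjective.1 hf_inj) a₀
  exact hI (inl a₀) s(inr b, inl (f b)) (by simp) (by simp [hb]) (hf b).symm

end CompleteBipartite

section Construction

def cyclicEdgeColoring (m n N : ℕ) : Sym2 (Fin m ⊕ Fin n) → ℕ :=
  Sym2.lift ⟨fun u v => (Sum.elim Fin.val Fin.val u + Sum.elim Fin.val Fin.val v) % N + 1,
    fun u _ => by dsimp only; rw [Nat.add_comm (Sum.elim Fin.val Fin.val u)]⟩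

variable {m n N : ℕ}

@[simp] lemma cyclicEdgeColoring_mk (i : Fin m) (j : Fin n) :
    cyclicEdgeColoring m n N s(inl i, inr j) = ((i : ℕ) + j) % N + 1 := rfl

variable (m n N) in
def cyclicVertexColoring : Fin m ⊕ Fin n → ℕ :=
  Sum.elim (fun _ => N + 1) (fun j => (m + j) % N + 1)

@[simp] lemma cyclicVertexColoring_inl (i : Fin m) :
    cyclicVertexColoring m n N (inl i) = N + 1 := rfl

@[simp] lemma cyclicVertexColoring_inr (j : Fin n) :
    cyclicVertexColoring m n N (inr j) = (m + j) % N + 1 := rfl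

lemma isTotalColoringWith_cyclic (hm : m < N) (hn : n ≤ N) :
    IsTotalColoringWith (completeBipartiteGraph (Fin m) (Fin n)) (N + 1)
      (cyclicVertexColoring m n N) (cyclicEdgeColoring m n N) := by
  have hN : 0 < N := by omega
  have hmod : ∀ x, x % N < N := fun x => Nat.mod_lt x hN
  refine ⟨⟨?_, ?_, ?_⟩, ?_, ?_⟩
  · rintro (i | j) (i' | j') h
    · simp at h
    · simpa using (hmod _).ne'
    · simpa using (hmod _).ne
    · simp at h
  · refine isProperEdgeColoring_completeBipartiteGraph (fun i j j' h => Fin.ext ?_)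
      (fun j i i' h => Fin.ext ?_) <;>
      simp only [cyclicEdgeColoring_mk, Nat.add_right_cancel_iff] at h
    · exact (Nat.ModEq.add_left_cancel' _ h).eq_of_lt_of_lt (by omega) (by omega)
    · exact (Nat.ModEq.add_right_cancel' _ h).eq_of_lt_of_lt (by omega) (by omega)
  · simp only [mem_edgeSet_completeBipartiteGraph]
    rintro v _ ⟨i, j, rfl⟩ hv
    rw [Sym2.mem_iff] at hv
    rcases hv with rfl | rfl
    · simpa using (hmod _).ne'
    · simp only [cyclicVertexColoring_inr, cyclicEdgeColoring_mk, ne_eq,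
        Nat.add_right_cancel_iff]
      exact fun hc => i.is_lt.ne' ((Nat.ModEq.add_right_cancel' _ hc).eq_of_lt_of_lt hm (by omega))
  · rintro (i | j)
    · simp
    · simpa using (hmod _).le
  · simp only [mem_edgeSet_completeBipartiteGraph]
    rintro _ ⟨i, j, rfl⟩
    simpa using (hmod _).le

lemma totalColorable_completeBipartiteGraph (hm : m < N) (hn : n ≤ N) :
    TotalColorable (completeBipartiteGraph (Fin m) (Fin n)) (N + 1) :=
  ⟨_, _, isTotalColoringWith_cyclic hm hn⟩

end Construction

section TotalChromaticNumber

variable {m n : ℕ}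

lemma totalChromaticNumber_completeBipartiteGraph_of_lt (hm : 0 < m) (hmn : m < n) :
    totalChromaticNumber (completeBipartiteGraph (Fin m) (Fin n)) = n + 1 := by
  rw [totalChromaticNumber_eq_sInf]
  refine IsLeast.csInf_eq ⟨totalColorable_completeBipartiteGraph hmn le_rfl, ?_⟩
  rintro k ⟨cv, ce, h⟩
  simpa using h.card_add_one_le_of_completeBipartiteGraph ⟨0, hm⟩

lemma totalChromaticNumber_completeBipartiteGraph_self (hn : 0 < n) :
    totalChromaticNumber (completeBipartiteGraph (Fin n) (Fin n)) = n + 2 := by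
  have : Nonempty (Fin n) := ⟨⟨0, hn⟩⟩
  rw [totalChromaticNumber_eq_sInf]
  refine IsLeast.csInf_eq
    ⟨totalColorable_completeBipartiteGraph (N := n + 1) (by omega) (by omega), ?_⟩
  rintro k ⟨cv, ce, h⟩
  have hle : n + 1 ≤ k := by simpa using h.card_add_one_le_of_completeBipartiteGraph ⟨0, hn⟩
  have hne : k ≠ n + 1 := by
    rintro rfl
    simpa using not_totalColorable_completeBipartiteGraph_self (α := Fin n)
      ⟨cv, ce, by simpa using h⟩
  omega

end TotalChromaticNumber

theorem stmt1 (m n : ℕ) (hm : 0 < m) (hn : 0 < n) :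
    totalChromaticNumber (completeBipartiteGraph (Fin m) (Fin n)) =
      if m ≠ n then max m n + 1 else n + 2 := by
  rcases lt_trichotomy m n with hmn | rfl | hnm
  · rw [if_pos hmn.ne, max_eq_right hmn.le]
    exact totalChromaticNumber_completeBipartiteGraph_of_lt hm hmn
  · rw [if_neg (not_not.2 rfl)]
    exact totalChromaticNumber_completeBipartiteGraph_self hm
  · rw [if_pos hnm.ne', max_eq_left hnm.le,
      totalChromaticNumber_congr (completeBipartiteGraphSwap _ _)]
    exact totalChromaticNumber_completeBipartiteGraph_of_lt hn hnm

end ITC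
end

section
/- If r = 2, or r is even and n is odd, then the complete balanced r-partite graph K_{n,...,n} (r parts of size n) admits an interval total coloring, and its minimum span satisfies w_τ(K_{n,...,n}) ≤ (3r/2 − 2)n + 2. -/
namespace ITC

variable {V : Type*}

/-! Let r = 2s. The complete graph K_{2s} has an interval edge colouring in which vertex p sees
exactly the colours τ(p), …, τ(p) + 2s - 2, where τ(p) = p for p < s and τ(p) = p - s otherwise.
Blow every vertex up into a part of size n and colour the copy of K_{n,n} between parts p and q by
the Latin square n·b(pq) + ((i + j) mod n), where b(pq) is the colour of pq in K_{2s}: a vertex of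
part p then sees the n(2s - 1) consecutive colours starting at nτ(p). Shifting all edge colours
up by 2, a vertex of a part p < s takes the free colour just below its interval and one of a part
p ≥ s the colour just above; these vertex colours differ between parts, and the palettes of
parts 0, …, s - 1 and 2s - 1 together cover 1, …, (3s - 2)n + 2. -/

open Set

section IntervalTotalColoring

variable {V : Type*} {G : SimpleGraph V}

theorem isIntervalTotalColoring_of_edgePalette {t : ℕ} {cv : V → ℕ} {ce : Sym2 V → ℕ}
    (a : V → ℕ) (hcv : ∀ u v, G.Adj u v → cv u ≠ cv v) (hce : IsProperEdgeColoring G ce)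
    (hpal : ∀ v, edgePalette G ce v = Icc (a v + 1) (a v + deg G v))
    (hend : ∀ v, cv v = a v ∨ cv v = a v + deg G v + 1)
    (hspan : ⋃ v, palette G cv ce v = Icc 1 t) :
    IsIntervalTotalColoring G t cv ce := by
  have hpalette : ∀ v, palette G cv ce v = insert (cv v) (Icc (a v + 1) (a v + deg G v)) :=
    fun v => by rw [← hpal]; rfl
  have hsub : ∀ v, palette G cv ce v ⊆ Icc 1 t := fun v => hspan ▸ subset_iUnion _ v
  refine ⟨⟨hcv, hce, ?_⟩, fun v => hsub v (mem_insert _ _), ?_, ?_, ?_⟩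
  · rintro v e he hve h
    have hmem : ce e ∈ Icc (a v + 1) (a v + deg G v) := hpal v ▸ ⟨e, he, hve, rfl⟩
    rcases hend v with h' | h' <;> simp only [mem_Icc] at hmem <;> omega
  · intro e he
    induction e using Sym2.ind with
    | _ u w => exact hsub u (mem_insert_of_mem _ ⟨_, he, Sym2.mem_mk_left u w, rfl⟩)
  · intro c hc
    rw [← hspan] at hc
    obtain ⟨v, hv | ⟨e, he, -, hce⟩⟩ := mem_iUnion.1 hc
    · exact Or.inl ⟨v, hv.symm⟩
    · exact Or.inr ⟨e, he, hce⟩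
  · intro v
    rcases hend v with h | h
    · exact ⟨a v, by ext c; simp only [hpalette, h, mem_insert_iff, mem_Icc]; omega⟩
    · exact ⟨a v + 1, by ext c; simp only [hpalette, h, mem_insert_iff, mem_Icc]; omega⟩

end IntervalTotalColoring

theorem Nat.exists_mul_add_eq_iff_mem_Ico {n a b c : ℕ} (hn : 0 < n) :
    (∃ k ∈ Ico a b, ∃ x < n, n * k + x = c) ↔ c ∈ Ico (n * a) (n * b) := by
  constructor
  · rintro ⟨k, ⟨hak, hkb⟩, x, hx, rfl⟩
    have h1 : n * a ≤ n * k := Nat.mul_le_mul_left n hak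
    have h2 : n * (k + 1) ≤ n * b := Nat.mul_le_mul_left n hkb
    rw [Nat.mul_succ] at h2
    exact ⟨by omega, by omega⟩
  · rintro ⟨hac, hcb⟩
    refine ⟨c / n, ⟨?_, ?_⟩, c % n, Nat.mod_lt c hn, Nat.div_add_mod c n⟩
    · rwa [Nat.le_div_iff_mul_le hn, Nat.mul_comm]
    · rwa [Nat.div_lt_iff_lt_mul hn, Nat.mul_comm]

theorem Nat.eq_and_eq_of_mul_add_eq {n k k' x y : ℕ} (hx : x < n) (hy : y < n)
    (h : n * k + x = n * k' + y) : k = k' ∧ x = y := by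
  have hn : 0 < n := by omega
  have hk : k = k' := by
    have := congrArg (· / n) h
    simpa [Nat.mul_add_div hn, Nat.div_eq_of_lt hx, Nat.div_eq_of_lt hy] using this
  subst hk
  exact ⟨rfl, by omega⟩

local notation "K[" r ", " n "]" => SimpleGraph.completeMultipartiteGraph (fun _ : Fin r => Fin n)

theorem deg_completeMultipartiteGraph {r n : ℕ} (v : Σ _ : Fin r, Fin n) :
    deg K[r, n] v = (r - 1) * n := by
  classical
  have hnbr : (K[r, n].neighborSet v).toFinset =
      (Finset.univ.erase v.1).sigma fun _ => Finset.univ := by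
    ext w
    simp [ne_comm]
  rw [deg, Set.ncard_eq_toFinset_card', hnbr, Finset.card_sigma]
  simp

section Blowup

variable {r n : ℕ}

def blowupEdgeColoring (n : ℕ) (b : Sym2 (Fin r) → ℕ) : Sym2 (Σ _ : Fin r, Fin n) → ℕ :=
  Sym2.lift ⟨fun u v => n * b s(u.1, v.1) + ((u.2 : ℕ) + v.2) % n,
    fun u v => by dsimp only; rw [Sym2.eq_swap, Nat.add_comm (u.2 : ℕ)]⟩

theorem blowupEdgeColoring_mk (b : Sym2 (Fin r) → ℕ) (u v : Σ _ : Fin r, Fin n) :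
    blowupEdgeColoring n b s(u, v) = n * b s(u.1, v.1) + ((u.2 : ℕ) + v.2) % n := rfl

theorem isProperEdgeColoring_blowupEdgeColoring {b : Sym2 (Fin r) → ℕ}
    (hb : ∀ p q q', q ≠ p → q' ≠ p → b s(p, q) = b s(p, q') → q = q') :
    IsProperEdgeColoring K[r, n] (blowupEdgeColoring n b) := by
  rintro e f he hf hef ⟨w, hwe, hwf⟩ hc
  obtain ⟨x, rfl⟩ := Sym2.mem_iff_exists.mp hwe
  obtain ⟨y, rfl⟩ := Sym2.mem_iff_exists.mp hwf
  rw [SimpleGraph.mem_edgeSet] at he hf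
  rw [blowupEdgeColoring_mk, blowupEdgeColoring_mk] at hc
  have hn : 0 < n := w.2.pos
  obtain ⟨hpart, hmod⟩ := Nat.eq_and_eq_of_mul_add_eq (Nat.mod_lt _ hn) (Nat.mod_lt _ hn) hc
  have hx1 : x.1 = y.1 := hb w.1 x.1 y.1 (Ne.symm he) (Ne.symm hf) hpart
  have hx2 : (x.2 : ℕ) = y.2 := by
    have := Nat.ModEq.add_left_cancel' (w.2 : ℕ) hmod
    rwa [Nat.ModEq, Nat.mod_eq_of_lt x.2.isLt, Nat.mod_eq_of_lt y.2.isLt] at this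
  exact hef (congrArg _ (Sigma.ext hx1 (heq_of_eq (Fin.ext hx2))))

theorem mem_edgePalette_blowupEdgeColoring (b : Sym2 (Fin r) → ℕ) (v : Σ _ : Fin r, Fin n)
    (c : ℕ) : c ∈ edgePalette K[r, n] (blowupEdgeColoring n b) v ↔
      ∃ q ≠ v.1, ∃ x < n, n * b s(v.1, q) + x = c := by
  constructor
  · rintro ⟨e, he, hve, rfl⟩
    obtain ⟨w, rfl⟩ := Sym2.mem_iff_exists.mp hve
    exact ⟨w.1, Ne.symm he, _, Nat.mod_lt _ v.2.pos, rfl⟩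
  · rintro ⟨q, hq, x, hx, rfl⟩
    let w : Σ _ : Fin r, Fin n := ⟨q, (x + n - v.2) % n, Nat.mod_lt _ v.2.pos⟩
    refine ⟨s(v, w), Ne.symm hq, Sym2.mem_mk_left v w, ?_⟩
    have hsum : ((v.2 : ℕ) + (x + n - v.2) % n) % n = x := by
      rw [Nat.add_mod_mod, show (v.2 : ℕ) + (x + n - v.2) = x + n by omega, Nat.add_mod_right,
        Nat.mod_eq_of_lt hx]
    rw [blowupEdgeColoring_mk, hsum]

theorem edgePalette_blowupEdgeColoring {b : Sym2 (Fin r) → ℕ} {α β : Fin r → ℕ}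
    (hb : ∀ p k, (∃ q ≠ p, b s(p, q) = k) ↔ k ∈ Ico (α p) (β p))
    (v : Σ _ : Fin r, Fin n) :
    edgePalette K[r, n] (blowupEdgeColoring n b) v = Ico (n * α v.1) (n * β v.1) := by
  ext c
  rw [mem_edgePalette_blowupEdgeColoring, ← Nat.exists_mul_add_eq_iff_mem_Ico v.2.pos]
  constructor
  · rintro ⟨q, hq, x, hx, rfl⟩
    exact ⟨_, (hb v.1 _).1 ⟨q, hq, rfl⟩, x, hx, rfl⟩
  · rintro ⟨k, hk, x, hx, rfl⟩
    obtain ⟨q, hq, rfl⟩ := (hb v.1 k).2 hk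
    exact ⟨q, hq, x, hx, rfl⟩

end Blowup

/- With vertices a < s called low and s + a high: at a low vertex a the low neighbours b give the
colours a + b, the high vertex s gives the missing 2a and the other high vertices
a + s, …, a + 2s - 2; the colours at a high vertex fit together in the same way. -/
def cliqueColor (s p q : ℕ) : ℕ :=
  if max p q < s then min p q + max p q
  else if min p q < s then (if max p q = s then 2 * min p q else min p q + max p q - 1)
  else if min p q = s then 2 * max p q - (2 * s + 1)
  else min p q + max p q - (2 * s + 1)

def cliqueStart (s p : ℕ) : ℕ := if p < s then p else p - s

theorem cliqueColor_comm (s p q : ℕ) : cliqueColor s p q = cliqueColor s q p := by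
  simp only [cliqueColor, max_comm, min_comm]

theorem cliqueColor_mem_Ico {s p q : ℕ} (hp : p < 2 * s) (hq : q < 2 * s) :
    cliqueColor s p q ∈ Ico (cliqueStart s p) (cliqueStart s p + (2 * s - 1)) := by
  simp only [cliqueColor, cliqueStart, min_def, max_def, mem_Ico]
  split_ifs <;> omega

theorem cliqueColor_inj {s p q q' : ℕ} (hp : p < 2 * s) (hq : q < 2 * s) (hq' : q' < 2 * s)
    (hqp : q ≠ p) (hq'p : q' ≠ p) (h : cliqueColor s p q = cliqueColor s p q') : q = q' := by
  simp only [cliqueColor, min_def, max_def] at h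
  split_ifs at h <;> omega

def cliqueColoring (s : ℕ) : Sym2 (Fin (2 * s)) → ℕ :=
  Sym2.lift ⟨fun p q => cliqueColor s p q, fun p q => cliqueColor_comm s p q⟩

theorem cliqueColoring_inj {s : ℕ} {p q q' : Fin (2 * s)} (hq : q ≠ p) (hq' : q' ≠ p)
    (h : cliqueColoring s s(p, q) = cliqueColoring s s(p, q')) : q = q' :=
  Fin.ext (cliqueColor_inj p.isLt q.isLt q'.isLt (Fin.val_ne_of_ne hq) (Fin.val_ne_of_ne hq') h)

theorem exists_cliqueColoring_eq_iff {s : ℕ} (p : Fin (2 * s)) (k : ℕ) :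
    (∃ q ≠ p, cliqueColoring s s(p, q) = k) ↔
      k ∈ Ico (cliqueStart s p) (cliqueStart s p + (2 * s - 1)) := by
  classical
  set colors := (Finset.univ.erase p).image fun q : Fin (2 * s) => cliqueColor s p q
  have hsub : colors ⊆ Finset.Ico (cliqueStart s p) (cliqueStart s p + (2 * s - 1)) := by
    simp only [colors, Finset.image_subset_iff, Finset.mem_erase]
    intro q _
    simpa using cliqueColor_mem_Ico p.isLt q.isLt
  have hcard :
      (Finset.Ico (cliqueStart s p) (cliqueStart s p + (2 * s - 1))).card ≤ colors.card := by
    rw [Finset.card_image_of_injOn, Nat.card_Ico, Finset.card_erase_of_mem (Finset.mem_univ _),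
      Finset.card_univ, Fintype.card_fin, Nat.add_sub_cancel_left]
    intro q hq q' hq' h
    simp only [Finset.coe_erase, Finset.coe_univ, mem_sdiff, mem_singleton_iff] at hq hq'
    exact cliqueColoring_inj hq.2 hq'.2 h
  have heq := Finset.eq_of_subset_of_card_le hsub hcard
  rw [← Finset.coe_Ico, ← heq]
  simp [colors, cliqueColoring, and_comm]

section EvenParts

variable {s n : ℕ}

def evenVertexColor (s n : ℕ) (v : Σ _ : Fin (2 * s), Fin n) : ℕ :=
  if (v.1 : ℕ) < s then n * cliqueStart s v.1 + 1
  else n * cliqueStart s v.1 + (2 * s - 1) * n + 2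

def evenEdgeColor (s n : ℕ) (e : Sym2 (Σ _ : Fin (2 * s), Fin n)) : ℕ :=
  blowupEdgeColoring n (cliqueColoring s) e + 2

theorem cliqueStart_le {p : ℕ} (hp : p < 2 * s) : cliqueStart s p ≤ s - 1 := by
  unfold cliqueStart; split_ifs <;> omega

theorem evenVertexColor_ne {u v : Σ _ : Fin (2 * s), Fin n} (huv : u.1 ≠ v.1) :
    evenVertexColor s n u ≠ evenVertexColor s n v := by
  have hu := Nat.mul_le_mul_left n (cliqueStart_le u.1.isLt)
  have hv := Nat.mul_le_mul_left n (cliqueStart_le v.1.isLt)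
  have hlow : n * (s - 1) ≤ (2 * s - 1) * n := by
    rw [Nat.mul_comm]; exact Nat.mul_le_mul_right n (by omega)
  have hside :
      cliqueStart s u.1 = cliqueStart s v.1 → ((u.1 : ℕ) < s ↔ ¬ (v.1 : ℕ) < s) := by
    unfold cliqueStart; have := Fin.val_ne_of_ne huv; split_ifs <;> omega
  have hcancel : n * cliqueStart s u.1 = n * cliqueStart s v.1 →
      cliqueStart s u.1 = cliqueStart s v.1 :=
    Nat.eq_of_mul_eq_mul_left u.2.pos
  unfold evenVertexColor
  split_ifs <;> omega

theorem edgePalette_evenEdgeColor (v : Σ _ : Fin (2 * s), Fin n) :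
    edgePalette K[2 * s, n] (evenEdgeColor s n) v =
      Icc (n * cliqueStart s v.1 + 1 + 1) (n * cliqueStart s v.1 + 1 + deg K[2 * s, n] v) := by
  have hshift : edgePalette K[2 * s, n] (evenEdgeColor s n) v =
      (· + 2) '' edgePalette K[2 * s, n] (blowupEdgeColoring n (cliqueColoring s)) v := by
    ext c; simp [edgePalette, evenEdgeColor, and_assoc]
  rw [hshift, edgePalette_blowupEdgeColoring exists_cliqueColoring_eq_iff, image_add_const_Ico,
    deg_completeMultipartiteGraph, Nat.mul_add, Nat.mul_comm n (2 * s - 1)]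
  ext c
  simp only [mem_Ico, mem_Icc]
  omega

theorem palette_even (v : Σ _ : Fin (2 * s), Fin n) :
    palette K[2 * s, n] (evenVertexColor s n) (evenEdgeColor s n) v =
      insert (evenVertexColor s n v)
        (Icc (n * cliqueStart s v.1 + 2) (n * cliqueStart s v.1 + 1 + (2 * s - 1) * n)) := by
  show insert _ (edgePalette _ _ _) = _
  rw [edgePalette_evenEdgeColor, deg_completeMultipartiteGraph]

theorem iUnion_palette_even (hs : 1 ≤ s) (hn : 0 < n) :
    ⋃ v, palette K[2 * s, n] (evenVertexColor s n) (evenEdgeColor s n) v =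
      Icc 1 ((3 * s - 2) * n + 2) := by
  have htop : (3 * s - 2) * n = (s - 1) * n + (2 * s - 1) * n := by
    rw [← Nat.add_mul]; congr 1; omega
  have hgap : n ≤ (2 * s - 1) * n := Nat.le_mul_of_pos_left n (by omega)
  ext c
  simp only [mem_iUnion, palette_even, mem_insert_iff, mem_Icc]
  constructor
  · rintro ⟨v, hc⟩
    have hv : n * cliqueStart s v.1 ≤ (s - 1) * n := by
      rw [Nat.mul_comm]; exact Nat.mul_le_mul_right n (cliqueStart_le v.1.isLt)
    unfold evenVertexColor at hc
    split_ifs at hc <;> omega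
  · rintro ⟨hc1, hc2⟩
    by_cases hlow : c ≤ (s - 1) * n + 1
    · have hp : (c - 1) / n < s := by
        rw [Nat.div_lt_iff_lt_mul hn]
        have : (s - 1) * n + n = s * n := by rw [← Nat.succ_mul]; congr 1; omega
        omega
      refine ⟨⟨⟨(c - 1) / n, by omega⟩, ⟨0, hn⟩⟩, ?_⟩
      have := Nat.div_add_mod (c - 1) n
      have := Nat.mod_lt (c - 1) hn
      simp only [evenVertexColor, cliqueStart, if_pos hp]
      omega
    · refine ⟨⟨⟨2 * s - 1, by omega⟩, ⟨0, hn⟩⟩, ?_⟩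
      have hstart : cliqueStart s (2 * s - 1) = s - 1 := by unfold cliqueStart; split_ifs <;> omega
      simp only [evenVertexColor, hstart, if_neg (show ¬ 2 * s - 1 < s by omega), Nat.mul_comm n]
      omega

theorem hasIntervalTotalColoring_even (hs : 1 ≤ s) (hn : 0 < n) :
    HasIntervalTotalColoring K[2 * s, n] ((3 * s - 2) * n + 2) := by
  refine ⟨evenVertexColor s n, evenEdgeColor s n,
    isIntervalTotalColoring_of_edgePalette (fun v => n * cliqueStart s v.1 + 1)
      (fun u v huv => evenVertexColor_ne huv) ?_ edgePalette_evenEdgeColor ?_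
      (iUnion_palette_even hs hn)⟩
  · intro e f he hf hef hw h
    exact isProperEdgeColoring_blowupEdgeColoring (fun _ _ _ => cliqueColoring_inj) e f he hf hef
      hw (Nat.add_right_cancel h)
  · intro v
    rw [deg_completeMultipartiteGraph]
    unfold evenVertexColor
    split_ifs
    · exact Or.inl rfl
    · exact Or.inr (by ring)

end EvenParts

theorem stmt5 (r n : ℕ) (hr : 2 ≤ r) (hn : 0 < n)
    (h : r = 2 ∨ (Even r ∧ Odd n)) :
    (∃ t, HasIntervalTotalColoring (SimpleGraph.completeMultipartiteGraph (fun _ : Fin r => Fin n)) t) ∧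
    wtau (SimpleGraph.completeMultipartiteGraph (fun _ : Fin r => Fin n)) ≤ (3 * r / 2 - 2) * n + 2 := by
  obtain ⟨s, rfl⟩ : ∃ s, r = 2 * s := by
    rcases h with rfl | ⟨heven, -⟩
    · exact ⟨1, rfl⟩
    · exact heven.two_dvd
  have hcol := hasIntervalTotalColoring_even (by omega : 1 ≤ s) hn
  rw [show 3 * (2 * s) / 2 - 2 = 3 * s - 2 by omega]
  exact ⟨⟨_, hcol⟩, Nat.sInf_le hcol⟩

end ITC
end
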